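/- arXiv:2509.08641 — 2 statements merged into one kernel-verified Lean document; each statement's English description precedes it below -/
import Mathlib

section
/- Let Ψ : [0,∞) → [0,∞) be a homeomorphism with doubling constant C_Ψ (i.e. Ψ(2r) ≤ C_Ψ Ψ(r) for all r > 0), and suppose there are constants C₁ > 0 and r₁ > 0 such that (R/r)^p ≤ C₁ · Ψ(R)/Ψ(r) for all 0 < r ≤ R < r₁, and suppose limsup_{r→0} Ψ(r)/r^p > 0. Then there exists C > 0 such that (1/C) r^p ≤ Ψ(r) ≤ C r^p for all r ∈ (0, r₁). -/
open Set

/-!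
Rewritten with the ratio `Ψ r / r ^ p`, the comparison hypothesis says that this ratio is
increasing up to the factor `C₁` on `(0, r₁)`. Comparing with the small radii where the ratio is
at least `ε` gives the lower bound `ε / C₁`; comparing with a radius in `[r₁ / 2, r₁)` and using
the monotonicity of `Ψ` gives the upper bound `C₁ Ψ(r₁) / (r₁ / 2) ^ p`.
-/

lemma div_rpow_le_mul_div_rpow_of_rpow_div_le {x y r R p C : ℝ} (hx : 0 < x) (hr : 0 < r)
    (hR : 0 < R) (h : (R / r) ^ p ≤ C * (y / x)) : x / r ^ p ≤ C * (y / R ^ p) := by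
  have hrp : 0 < r ^ p := Real.rpow_pos_of_pos hr p
  have hRp : 0 < R ^ p := Real.rpow_pos_of_pos hR p
  rw [Real.div_rpow hR.le hr.le, div_le_iff₀ hrp] at h
  rw [div_le_iff₀ hrp, mul_div_assoc', div_mul_eq_mul_div, le_div_iff₀ hRp]
  calc x * R ^ p ≤ x * (C * (y / x) * r ^ p) := by gcongr
    _ = C * y * r ^ p := by field_simp

lemma div_le_and_le_mul_of_le_div_of_div_le {x y a b : ℝ} (hy : 0 < y) (ha : 0 < a)
    (hax : a ≤ x / y) (hxb : x / y ≤ b) : y / max a⁻¹ b ≤ x ∧ x ≤ max a⁻¹ b * y := by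
  rw [le_div_iff₀ hy] at hax
  rw [div_le_iff₀ hy] at hxb
  constructor
  · calc y / max a⁻¹ b ≤ y / a⁻¹ := by gcongr; exact le_max_left _ _
      _ = a * y := by rw [div_inv_eq_mul, mul_comm]
      _ ≤ x := hax
  · calc x ≤ b * y := hxb
      _ ≤ max a⁻¹ b * y := by gcongr; exact le_max_right _ _

section RatioBounds

variable {Ψ : ℝ → ℝ} {p C₁ r₁ : ℝ}

lemma le_div_rpow_of_frequently
    (hq : ∀ r R : ℝ, 0 < r → r ≤ R → R < r₁ → Ψ r / r ^ p ≤ C₁ * (Ψ R / R ^ p))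
    (hC₁ : 0 < C₁) {ε : ℝ}
    (hε : ∀ δ : ℝ, 0 < δ → ∃ s : ℝ, 0 < s ∧ s < δ ∧ ε ≤ Ψ s / s ^ p)
    {r : ℝ} (hr : 0 < r) (hrr₁ : r < r₁) : ε / C₁ ≤ Ψ r / r ^ p := by
  obtain ⟨s, hs, hsr, hεs⟩ := hε r hr
  rw [div_le_iff₀' hC₁]
  exact hεs.trans (hq s r hs hsr.le hrr₁)

lemma div_rpow_le_of_monotoneOn
    (hq : ∀ r R : ℝ, 0 < r → r ≤ R → R < r₁ → Ψ r / r ^ p ≤ C₁ * (Ψ R / R ^ p))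
    (hmono : MonotoneOn Ψ (Ici 0)) (hΨpos : ∀ x, 0 < x → 0 < Ψ x) (hp : 0 ≤ p) (hC₁ : 0 ≤ C₁)
    {r : ℝ} (hr : 0 < r) (hrr₁ : r < r₁) : Ψ r / r ^ p ≤ C₁ * (Ψ r₁ / (r₁ / 2) ^ p) := by
  obtain ⟨R, hRdef⟩ : ∃ R, R = (r + r₁) / 2 := ⟨_, rfl⟩
  have hrR : r ≤ R := by linarith
  have hRr₁ : R < r₁ := by linarith
  have hR : r₁ / 2 ≤ R := by linarith
  have hRpos : 0 < R := hr.trans_le hrR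
  have hΨR : Ψ R ≤ Ψ r₁ := hmono (mem_Ici.2 hRpos.le) (mem_Ici.2 (hRpos.trans hRr₁).le) hRr₁.le
  have hr₁ : 0 < r₁ / 2 := by linarith
  calc Ψ r / r ^ p ≤ C₁ * (Ψ R / R ^ p) := hq r R hr hrR hRr₁
    _ ≤ C₁ * (Ψ r₁ / (r₁ / 2) ^ p) := by
      have hΨr₁ := hΨpos r₁ (hRpos.trans hRr₁)
      gcongr

end RatioBounds

theorem stmt_0_general (Ψ : ℝ → ℝ) (p : ℝ) (hp : 1 < p)
    (hΨ0 : Ψ 0 = 0)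
    (hΨmono : StrictMonoOn Ψ (Set.Ici 0))
    (C₁ r₁ : ℝ) (hC₁ : 0 < C₁)
    (hcomp : ∀ r R : ℝ, 0 < r → r ≤ R → R < r₁ → (R / r) ^ p ≤ C₁ * (Ψ R / Ψ r))
    (hlimsup : ∃ ε : ℝ, 0 < ε ∧ ∀ δ : ℝ, 0 < δ → ∃ r : ℝ, 0 < r ∧ r < δ ∧ ε ≤ Ψ r / r ^ p) :
    ∃ C : ℝ, 0 < C ∧ ∀ r : ℝ, 0 < r → r < r₁ →
      r ^ p / C ≤ Ψ r ∧ Ψ r ≤ C * r ^ p := by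
  obtain ⟨ε, hε, hsmall⟩ := hlimsup
  have hΨpos : ∀ x, 0 < x → 0 < Ψ x := fun x hx => by
    simpa only [hΨ0] using hΨmono (mem_Ici.2 le_rfl) (mem_Ici.2 hx.le) hx
  have hq : ∀ r R : ℝ, 0 < r → r ≤ R → R < r₁ → Ψ r / r ^ p ≤ C₁ * (Ψ R / R ^ p) :=
    fun r R hr hrR hRr₁ => div_rpow_le_mul_div_rpow_of_rpow_div_le (hΨpos r hr) hr
      (hr.trans_le hrR) (hcomp r R hr hrR hRr₁)
  refine ⟨max (ε / C₁)⁻¹ (C₁ * (Ψ r₁ / (r₁ / 2) ^ p)),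
    lt_max_of_lt_left (by positivity), fun r hr hrr₁ => ?_⟩
  exact div_le_and_le_mul_of_le_div_of_div_le (Real.rpow_pos_of_pos hr p) (by positivity)
    (le_div_rpow_of_frequently hq hC₁ hsmall hr hrr₁)
    (div_rpow_le_of_monotoneOn hq hΨmono.monotoneOn hΨpos (by linarith) hC₁.le hr hrr₁)

/-- If Ψ : [0,∞) → [0,∞) is a homeomorphism (strictly increasing,
continuous, Ψ(0)=0) with doubling constant C_Ψ, satisfying the reverse
comparison (R/r)^p ≤ C₁ Ψ(R)/Ψ(r) for 0 < r ≤ R < r₁, and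
limsup_{r→0} Ψ(r)/r^p > 0, then Ψ(r) ≍ r^p on (0, r₁). -/
theorem stmt_0 (Ψ : ℝ → ℝ) (p : ℝ) (hp : 1 < p)
    (hΨ0 : Ψ 0 = 0)
    (hΨmono : StrictMonoOn Ψ (Set.Ici 0))
    (hΨcont : ContinuousOn Ψ (Set.Ici 0))
    (C_Ψ : ℝ) (hC_Ψ : 1 < C_Ψ)
    (hdoubling : ∀ r : ℝ, 0 < r → Ψ (2 * r) ≤ C_Ψ * Ψ r)
    (C₁ r₁ : ℝ) (hC₁ : 0 < C₁) (hr₁ : 0 < r₁)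
    (hcomp : ∀ r R : ℝ, 0 < r → r ≤ R → R < r₁ → (R / r) ^ p ≤ C₁ * (Ψ R / Ψ r))
    (hlimsup : ∃ ε : ℝ, 0 < ε ∧ ∀ δ : ℝ, 0 < δ → ∃ r : ℝ, 0 < r ∧ r < δ ∧ ε ≤ Ψ r / r ^ p) :
    ∃ C : ℝ, 0 < C ∧ ∀ r : ℝ, 0 < r → r < r₁ →
      r ^ p / C ≤ Ψ r ∧ Ψ r ≤ C * r ^ p :=
  stmt_0_general Ψ p hp hΨ0 hΨmono C₁ r₁ hC₁ hcomp hlimsup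
end

section
/- Let m and ν be Radon measures on a metric space (X,d) with m volume doubling, all closed balls compact. Write the Lebesgue decomposition m = m_a + m_s with m_a ≪ ν and m_s ⊥ ν. Suppose there exist C > 0 and R > 0 such that m(B(x,r)) ≤ C·m_a(B(x,r)) for all x ∈ X and r ∈ (0,R). Then m_s = 0, i.e. m ≪ ν. -/
/-! The absolutely continuous part `ρ = ν.withDensity (m.rnDeriv ν)` is dominated by `m`, and
doubling upgrades the hypothesis to `m ≤ C_VD C ρ` on all small closed balls. For a doubling
measure, closed balls shrinking to a point form a Vitali family, along which an inequality between
measures that holds for arbitrarily small balls around every point holds globally. Hence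
`m ≤ C_VD C • ρ ≪ ν`. -/

open Metric MeasureTheory Filter Topology
open scoped NNReal ENNReal

namespace MeasureTheory

variable {X : Type*} [MetricSpace X] [MeasurableSpace X]

theorem isUnifLocDoublingMeasure_of_measure_ball_two_mul_le (μ : Measure X) (D : ℝ≥0)
    (h : ∀ (x : X) (r : ℝ), 0 < r → μ (ball x (2 * r)) ≤ D * μ (ball x r)) :
    IsUnifLocDoublingMeasure μ := by
  refine ⟨⟨D ^ 2, eventually_of_mem self_mem_nhdsWithin fun ε (hε : 0 < ε) x => ?_⟩⟩
  calc μ (closedBall x (2 * ε)) ≤ μ (ball x (2 * (2 * ε))) :=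
        measure_mono (closedBall_subset_ball (by linarith))
    _ ≤ D * (D * μ (ball x ε)) :=
        (h x (2 * ε) (by linarith)).trans (mul_le_mul_right (h x ε hε) _)
    _ = ↑(D ^ 2) * μ (ball x ε) := by push_cast; ring
    _ ≤ ↑(D ^ 2) * μ (closedBall x ε) := mul_le_mul_right (measure_mono ball_subset_closedBall) _

theorem measure_le_of_frequently_measure_closedBall_le [SecondCountableTopology X] [BorelSpace X]
    {μ ρ : Measure X} [IsLocallyFiniteMeasure μ] [IsUnifLocDoublingMeasure μ]
    [IsLocallyFiniteMeasure ρ]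
    (h : ∀ x : X, ∃ᶠ r in 𝓝[>] (0 : ℝ), μ (closedBall x r) ≤ ρ (closedBall x r)) : μ ≤ ρ :=
  Measure.le_intro fun s _ _ =>
    (IsUnifLocDoublingMeasure.vitaliFamily μ 1).measure_le_of_frequently_le ρ
      Measure.AbsolutelyContinuous.rfl s fun x _ =>
        (IsUnifLocDoublingMeasure.tendsto_closedBall_filterAt μ (fun _ => x) id tendsto_id
          (eventually_of_mem self_mem_nhdsWithin fun r (hr : 0 < r) => by
            simp [hr.le])).frequently (h x)

end MeasureTheory

theorem stmt_12_general {X : Type*} [MetricSpace X] [ProperSpace X]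
    [MeasurableSpace X] [BorelSpace X]
    (m ν : Measure X) [m.Regular]
    [m.HaveLebesgueDecomposition ν]
    (C_VD : ℝ≥0)
    (hdoubling : ∀ (x : X) (r : ℝ), 0 < r →
      m (ball x (2 * r)) ≤ (C_VD : ℝ≥0∞) * m (ball x r))
    (C : ℝ≥0) (R : ℝ) (hR : 0 < R)
    (hcomp : ∀ (x : X) (r : ℝ), 0 < r → r < R →
      m (ball x r) ≤ (C : ℝ≥0∞) * (ν.withDensity (m.rnDeriv ν)) (ball x r)) :
    m.singularPart ν = 0 ∧ m ≪ ν := by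
  set ρ := ν.withDensity (m.rnDeriv ν)
  have : IsLocallyFiniteMeasure ρ :=
    Measure.isLocallyFiniteMeasure_of_le (Measure.withDensity_rnDeriv_le m ν)
  have := isUnifLocDoublingMeasure_of_measure_ball_two_mul_le m C_VD hdoubling
  have hclosedBall : ∀ (x : X) (r : ℝ), 0 < r → r < R →
      m (closedBall x r) ≤ (C_VD * C : ℝ≥0) • ρ (closedBall x r) := fun x r hr hrR =>
    calc m (closedBall x r) ≤ m (ball x (2 * r)) :=
          measure_mono (closedBall_subset_ball (by linarith))
      _ ≤ C_VD * (C * ρ (ball x r)) :=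
          (hdoubling x r hr).trans (mul_le_mul_right (hcomp x r hr hrR) _)
      _ ≤ C_VD * (C * ρ (closedBall x r)) := by gcongr; exact ball_subset_closedBall
      _ = (C_VD * C : ℝ≥0) • ρ (closedBall x r) := by rw [ENNReal.smul_def]; push_cast; ring
  have hmρ : m ≤ (C_VD * C : ℝ≥0) • ρ :=
    measure_le_of_frequently_measure_closedBall_le fun x =>
      (eventually_of_mem (Ioo_mem_nhdsGT hR) fun r hr => hclosedBall x r hr.1 hr.2).frequently
  have hac : m ≪ ν :=
    (Measure.absolutelyContinuous_of_le_smul hmρ).trans (withDensity_absolutelyContinuous ν _)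
  exact ⟨(Measure.singularPart_eq_zero m ν).mpr hac, hac⟩

/-- For a volume doubling Radon measure m on a proper metric
space and a measure ν, writing m = m_a + m_s for the Lebesgue decomposition of
m w.r.t. ν, if m(B(x,r)) ≤ C·m_a(B(x,r)) for all small radii, then the
singular part vanishes and m ≪ ν. -/
theorem stmt_12 {X : Type*} [MetricSpace X] [ProperSpace X]
    [TopologicalSpace.SeparableSpace X]
    [MeasurableSpace X] [BorelSpace X]
    (m ν : Measure X) [m.Regular] [SigmaFinite ν]
    [m.HaveLebesgueDecomposition ν]
    (hpos : ∀ (x : X) (r : ℝ), 0 < r → 0 < m (ball x r))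
    (hfin : ∀ (x : X) (r : ℝ), 0 < r → m (ball x r) < ⊤)
    (C_VD : ℝ≥0) (hC_VD : 1 ≤ C_VD)
    (hdoubling : ∀ (x : X) (r : ℝ), 0 < r →
      m (ball x (2 * r)) ≤ (C_VD : ℝ≥0∞) * m (ball x r))
    (C : ℝ≥0) (hC : 0 < C) (R : ℝ) (hR : 0 < R)
    (hcomp : ∀ (x : X) (r : ℝ), 0 < r → r < R →
      m (ball x r) ≤ (C : ℝ≥0∞) * (ν.withDensity (m.rnDeriv ν)) (ball x r)) :
    m.singularPart ν = 0 ∧ m ≪ ν :=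
  stmt_12_general m ν C_VD hdoubling C R hR hcomp
end
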